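/- arXiv:2105.13211 — 4 statements merged into one kernel-verified Lean document; each statement's English description precedes it below -/
import Mathlib

section
/- The function a : [0, π) → ℝ defined by a(0) = 1 and a(x) = x·cot(x) for 0 < x < π is strictly decreasing on [0, π). -/
/-!
On `(0, π)` the derivative of `x cot x` is `(sin x cos x - x) / sin² x`, negative because
`sin x cos x = sin (2x) / 2 < x`. At the endpoint, `x cot x < 1 = a 0` amounts to
`x cos x < sin x`, i.e. `x < tan x` below `π / 2`, and is trivial where `cos x ≤ 0`.
-/

open Real Set

lemma sin_mul_cos_lt {x : ℝ} (hx : 0 < x) : sin x * cos x < x := by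
  have h := sin_lt (by linarith : 0 < 2 * x)
  rw [sin_two_mul] at h
  linarith

lemma mul_cos_lt_sin {x : ℝ} (h0 : 0 < x) (hπ : x < π) : x * cos x < sin x := by
  rcases lt_or_ge x (π / 2) with hx | hx
  · have hcos : 0 < cos x := cos_pos_of_mem_Ioo ⟨by linarith, hx⟩
    have htan := lt_tan h0 hx
    rwa [tan_eq_sin_div_cos, lt_div_iff₀ hcos] at htan
  · have hcos : cos x ≤ 0 := cos_nonpos_of_pi_div_two_le_of_le hx (by linarith [pi_pos])
    have hsin : 0 < sin x := sin_pos_of_pos_of_lt_pi h0 hπ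
    nlinarith

lemma mul_cot_lt_one {x : ℝ} (h0 : 0 < x) (hπ : x < π) : x * cot x < 1 := by
  have hsin : 0 < sin x := sin_pos_of_pos_of_lt_pi h0 hπ
  rw [cot_eq_cos_div_sin, mul_div_assoc', div_lt_one hsin]
  exact mul_cos_lt_sin h0 hπ

lemma hasDerivAt_mul_cot {x : ℝ} (hsin : sin x ≠ 0) :
    HasDerivAt (fun y => y * cot y) ((sin x * cos x - x) / sin x ^ 2) x := by
  have hquot : HasDerivAt (fun y => y * cos y / sin y)
      (((1 * cos x + x * -sin x) * sin x - x * cos x * cos x) / sin x ^ 2) x :=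
    ((hasDerivAt_id x).mul (hasDerivAt_cos x)).div (hasDerivAt_sin x) hsin
  have hderiv : ((1 * cos x + x * -sin x) * sin x - x * cos x * cos x) / sin x ^ 2
      = (sin x * cos x - x) / sin x ^ 2 := by
    congr 1
    linear_combination (-x) * sin_sq_add_cos_sq x
  rw [hderiv] at hquot
  refine hquot.congr_of_eventuallyEq (Filter.Eventually.of_forall fun y => ?_)
  simp only [cot_eq_cos_div_sin, mul_div_assoc]

lemma strictAntiOn_mul_cot : StrictAntiOn (fun x => x * cot x) (Ioo 0 π) := by
  have hsin : ∀ x ∈ Ioo 0 π, 0 < sin x := fun x hx => sin_pos_of_pos_of_lt_pi hx.1 hx.2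
  refine strictAntiOn_of_hasDerivWithinAt_neg (convex_Ioo 0 π)
    (f' := fun x => (sin x * cos x - x) / sin x ^ 2)
    (fun x hx => (hasDerivAt_mul_cot (hsin x hx).ne').continuousAt.continuousWithinAt)
    (fun x hx => ?_) (fun x hx => ?_) <;> rw [interior_Ioo] at hx
  · exact (hasDerivAt_mul_cot (hsin x hx).ne').hasDerivWithinAt
  · exact div_neg_of_neg_of_pos (by linarith [sin_mul_cos_lt hx.1]) (pow_pos (hsin x hx) 2)

/-- The function `a : [0, π) → ℝ` defined by `a 0 = 1` and `a x = x * cot x`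
for `0 < x < π` is strictly decreasing on `[0, π)`. -/
theorem xcot_strictAntiOn :
    StrictAntiOn (fun x : ℝ => if x = 0 then 1 else x * Real.cot x)
      (Set.Ico 0 Real.pi) := by
  intro x hx y hy hxy
  have hy0 : 0 < y := hx.1.trans_lt hxy
  rcases hx.1.eq_or_lt with rfl | hx0
  · simpa [hy0.ne'] using mul_cot_lt_one hy0 hy.2
  · simpa [hx0.ne', hy0.ne'] using strictAntiOn_mul_cot ⟨hx0, hx.2⟩ ⟨hy0, hy.2⟩ hxy
end

section
/- The function c : (0, π) → ℝ defined by c(x) = (1 − x·cot(x))/x² is strictly increasing, satisfies c(x) → 1/3 as x → 0+, and c(π/2) = 4/π². Consequently, 1 − x·cot(x) ≤ (4/π²)·x² for all 0 < x ≤ π/2. -/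
/-!
The Mittag-Leffler expansion `cot x = 1/x + ∑_{n ≥ 1} (1/(x - nπ) + 1/(x + nπ))` turns the function
into the series `(1 - x cot x) / x² = ∑_{n ≥ 1} 2 / ((nπ)² - x²)`, valid for `x ∉ πℤ`. Every
term is strictly increasing on `[0, π)`, so the sum is too; dominating the terms on `(0, π/2)` by
their values at `π/2` gives the limit at `0+` as `∑ 2 / (nπ)² = 2 ζ(2) / π² = 1/3`.
-/

open Real Filter Topology Set

lemma Real.hasSum_pi_mul_cot_pi_mul_sub_inv {t : ℝ} (ht : t ∉ range ((↑) : ℤ → ℝ)) :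
    HasSum (fun n : ℕ => 1 / (t - (n + 1)) + 1 / (t + (n + 1))) (π * cot (π * t) - 1 / t) := by
  have hz : (t : ℂ) ∈ Complex.integerComplement := by
    rintro ⟨n, hn⟩
    exact ht ⟨n, by exact_mod_cast hn⟩
  have h := (summable_cotTerm hz).hasSum
  rw [← cot_series_rep' hz] at h
  rw [← Complex.hasSum_ofReal]
  push_cast [Complex.ofReal_cot]
  exact h

lemma hasSum_one_sub_mul_cot_div_sq {x : ℝ} (hx : sin x ≠ 0) :
    HasSum (fun n : ℕ => 2 / (((n + 1) * π) ^ 2 - x ^ 2)) ((1 - x * cot x) / x ^ 2) := by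
  have hπ := pi_pos.ne'
  have hx0 : x ≠ 0 := by rintro rfl; simp at hx
  have hxπ : x / π ∉ range ((↑) : ℤ → ℝ) := by
    rintro ⟨n, hn⟩
    exact hx (sin_eq_zero_iff.mpr ⟨n, by field_simp at hn; linarith⟩)
  have hterm (n : ℕ) : 2 / (((n + 1) * π) ^ 2 - x ^ 2) =
      -1 / (π * x) * (1 / (x / π - (n + 1)) + 1 / (x / π + (n + 1))) := by
    have hsub : x - (n + 1) * π ≠ 0 := fun h =>
      hxπ ⟨n + 1, by push_cast; field_simp; linarith⟩
    have hadd : x + (n + 1) * π ≠ 0 := fun h =>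
      hxπ ⟨-(n + 1), by push_cast; field_simp; linarith⟩
    rw [show x / π - (n + 1) = (x - (n + 1) * π) / π by field_simp,
      show x / π + (n + 1) = (x + (n + 1) * π) / π by field_simp, one_div_div, one_div_div]
    generalize ((n : ℝ) + 1) * π = m at hsub hadd ⊢
    rw [show m ^ 2 - x ^ 2 = -((x - m) * (x + m)) by ring]
    field_simp
    ring
  have hsum : (1 - x * cot x) / x ^ 2 =
      -1 / (π * x) * (π * cot (π * (x / π)) - 1 / (x / π)) := by
    rw [mul_div_cancel₀ _ hπ]
    field_simp
    ring
  rw [funext hterm, hsum]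
  exact (Real.hasSum_pi_mul_cot_pi_mul_sub_inv hxπ).mul_left _

lemma strictMonoOn_div_sq_sub_sq {c m : ℝ} (hc : 0 < c) :
    StrictMonoOn (fun x : ℝ => c / (m ^ 2 - x ^ 2)) (Ico 0 m) := by
  intro a ha b hb hab
  have hbm : 0 < m ^ 2 - b ^ 2 := by nlinarith [hb.1, hb.2]
  exact div_lt_div_of_pos_left hc hbm (by nlinarith [ha.1])

lemma pi_le_succ_mul_pi (n : ℕ) : π ≤ (n + 1) * π :=
  le_mul_of_one_le_left pi_pos.le (by simp)

lemma strictMonoOn_one_sub_mul_cot_div_sq :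
    StrictMonoOn (fun x : ℝ => (1 - x * cot x) / x ^ 2) (Ioo 0 π) := by
  intro a ha b hb hab
  have hsum {x : ℝ} (hx : x ∈ Ioo 0 π) := hasSum_one_sub_mul_cot_div_sq
    (sin_pos_of_pos_of_lt_pi hx.1 hx.2).ne'
  have hterm (n : ℕ) := strictMonoOn_div_sq_sub_sq two_pos (m := (n + 1) * π)
    ⟨ha.1.le, ha.2.trans_le (pi_le_succ_mul_pi n)⟩ ⟨hb.1.le, hb.2.trans_le (pi_le_succ_mul_pi n)⟩ hab
  exact hasSum_lt (fun n => (hterm n).le) (hterm 0) (hsum ha) (hsum hb)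

lemma hasSum_two_div_sq_succ_mul_pi :
    HasSum (fun n : ℕ => 2 / ((n + 1) * π) ^ 2) (1 / 3) := by
  have hπ := pi_pos.ne'
  have hf : (fun n : ℕ => 2 / ((n + 1) * π) ^ 2) =
      fun n => 2 / π ^ 2 * (1 / ((n + 1 : ℕ) : ℝ) ^ 2) := by
    funext n
    push_cast
    field_simp
  have ha : (1 / 3 : ℝ) = 2 / π ^ 2 * (π ^ 2 / 6 - ∑ i ∈ Finset.range 1, 1 / (i : ℝ) ^ 2) := by
    field_simp
    ring
  rw [hf, ha]
  exact ((hasSum_nat_add_iff' 1).mpr hasSum_zeta_two).mul_left _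

lemma tendsto_one_sub_mul_cot_div_sq :
    Tendsto (fun x : ℝ => (1 - x * cot x) / x ^ 2) (𝓝[>] 0) (𝓝 (1 / 3)) := by
  have hev : ∀ᶠ x in 𝓝[>] 0, x ∈ Ioo 0 (π / 2) := Ioo_mem_nhdsGT pi_div_two_pos
  have hhalf (n : ℕ) : π / 2 < (n + 1) * π :=
    (half_lt_self pi_pos).trans_le (pi_le_succ_mul_pi n)
  rw [← hasSum_two_div_sq_succ_mul_pi.tsum_eq]
  refine Tendsto.congr' ?_ (tendsto_tsum_of_dominated_convergence
    (f := fun x (n : ℕ) => 2 / (((n + 1) * π) ^ 2 - x ^ 2))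
    (hasSum_one_sub_mul_cot_div_sq (x := π / 2) (by simp)).summable (fun n => ?_) ?_)
  · filter_upwards [hev] with x hx
    exact (hasSum_one_sub_mul_cot_div_sq
      (sin_pos_of_pos_of_lt_pi hx.1 (hx.2.trans (half_lt_self pi_pos))).ne').tsum_eq
  · have hm : ((n + 1) * π : ℝ) ^ 2 - 0 ^ 2 ≠ 0 := ne_of_gt (by nlinarith [hhalf n, pi_pos])
    have hc : ContinuousAt (fun x : ℝ => 2 / (((n + 1) * π) ^ 2 - x ^ 2)) 0 :=
      continuousAt_const.div (by fun_prop) hm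
    simpa using hc.tendsto.mono_left nhdsWithin_le_nhds
  · filter_upwards [hev] with x hx n
    have hpos : 0 < ((n + 1) * π : ℝ) ^ 2 - x ^ 2 := by nlinarith [hhalf n, hx.1, hx.2]
    rw [Real.norm_of_nonneg (div_pos two_pos hpos).le]
    exact (strictMonoOn_div_sq_sub_sq two_pos ⟨hx.1.le, hx.2.trans (hhalf n)⟩
      ⟨pi_div_two_pos.le, hhalf n⟩ hx.2).le

/-- The function `c : (0, π) → ℝ`, `c x = (1 - x * cot x) / x ^ 2`, is strictly
increasing, tends to `1/3` as `x → 0+`, and satisfies `c (π/2) = 4/π²`.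
Consequently, `1 - x * cot x ≤ (4/π²) * x ^ 2` for all `0 < x ≤ π/2`. -/
theorem one_sub_xcot_div_sq :
    StrictMonoOn (fun x : ℝ => (1 - x * Real.cot x) / x ^ 2) (Set.Ioo 0 Real.pi) ∧
    Filter.Tendsto (fun x : ℝ => (1 - x * Real.cot x) / x ^ 2)
      (nhdsWithin 0 (Set.Ioi 0)) (nhds (1 / 3)) ∧
    (1 - Real.pi / 2 * Real.cot (Real.pi / 2)) / (Real.pi / 2) ^ 2 = 4 / Real.pi ^ 2 ∧
    ∀ x : ℝ, 0 < x → x ≤ Real.pi / 2 →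
      1 - x * Real.cot x ≤ 4 / Real.pi ^ 2 * x ^ 2 := by
  have hval : (1 - π / 2 * cot (π / 2)) / (π / 2) ^ 2 = 4 / π ^ 2 := by
    rw [cot_eq_cos_div_sin, cos_pi_div_two]
    field_simp
    ring
  refine ⟨strictMonoOn_one_sub_mul_cot_div_sq, tendsto_one_sub_mul_cot_div_sq, hval, ?_⟩
  intro x hx hxle
  have hπ2 : π / 2 < π := half_lt_self pi_pos
  have hle : (1 - x * cot x) / x ^ 2 ≤ 4 / π ^ 2 := hval ▸
    strictMonoOn_one_sub_mul_cot_div_sq.monotoneOn ⟨hx, hxle.trans_lt hπ2⟩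
      ⟨pi_div_two_pos, hπ2⟩ hxle
  rwa [div_le_iff₀ (by positivity)] at hle
end

section
/- The function c : (0, π) → ℝ defined by c(x) = (1 − x·cot(x))/x is strictly increasing, satisfies c(x) → 0 as x → 0+, and c(π/2) = 2/π. Consequently, 1 − x·cot(x) ≤ (2/π)·x for all 0 < x ≤ π/2. -/
/-!
On `(0, π)` we have `(1 - x cot x) / x = 1/x - cot x`, whose derivative `1/sin² x - 1/x²` is
positive because `|sin x| < |x|`; the inequality is then `c x ≤ c (π/2) = 2/π`, as
`cot (π/2) = 0`. The limit at `0⁺` follows by squeezing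
`1/x - cot x = (sin x - x cos x)/(x sin x)` between `0` (from `x < tan x`) and `π x / 4`
(from `sin x - x cos x ≤ x³/2` and Jordan's inequality `sin x ≥ 2x/π`).
-/

open Real Set Filter Topology

namespace Real

lemma hasDerivAt_cot {x : ℝ} (hx : sin x ≠ 0) : HasDerivAt cot (-1 / sin x ^ 2) x := by
  have h := (hasDerivAt_cos x).div (hasDerivAt_sin x) hx
  rw [show -sin x * sin x - cos x * cos x = -1 by nlinarith [sin_sq_add_cos_sq x]] at h
  rwa [show cot = cos / sin from funext cot_eq_cos_div_sin]

lemma hasDerivAt_inv_sub_cot {x : ℝ} (hx : sin x ≠ 0) :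
    HasDerivAt (fun y => y⁻¹ - cot y) (1 / sin x ^ 2 - 1 / x ^ 2) x := by
  have hx0 : x ≠ 0 := by rintro rfl; simp at hx
  exact ((hasDerivAt_inv hx0).sub (hasDerivAt_cot hx)).congr_deriv (by ring)

lemma strictMonoOn_inv_sub_cot : StrictMonoOn (fun x => x⁻¹ - cot x) (Ioo 0 π) := by
  have hsin {x : ℝ} (hx : x ∈ Ioo 0 π) : 0 < sin x := sin_pos_of_pos_of_lt_pi hx.1 hx.2
  apply strictMonoOn_of_deriv_pos (convex_Ioo 0 π)
  · exact fun x hx => (hasDerivAt_inv_sub_cot (hsin hx).ne').continuousAt.continuousWithinAt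
  · intro x hx
    rw [interior_Ioo] at hx
    rw [(hasDerivAt_inv_sub_cot (hsin hx).ne').deriv, sub_pos]
    exact one_div_lt_one_div_of_lt (pow_pos (hsin hx) 2) (sin_sq_lt_sq hx.1.ne')

lemma one_sub_mul_cot_div {x : ℝ} (hx : x ≠ 0) : (1 - x * cot x) / x = x⁻¹ - cot x := by
  field_simp

lemma inv_sub_cot_eq_div {x : ℝ} (hx : x ≠ 0) (hs : sin x ≠ 0) :
    x⁻¹ - cot x = (sin x - x * cos x) / (x * sin x) := by
  rw [cot_eq_cos_div_sin]
  field_simp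

lemma inv_sub_cot_nonneg {x : ℝ} (hx0 : 0 < x) (hx : x < π / 2) : 0 ≤ x⁻¹ - cot x := by
  have hs : 0 < sin x := sin_pos_of_pos_of_lt_pi hx0 (by linarith [pi_pos])
  have hc : 0 < cos x := cos_pos_of_mem_Ioo ⟨by linarith, hx⟩
  have hxc : x * cos x < sin x := by
    simpa only [tan_eq_sin_div_cos, lt_div_iff₀ hc] using lt_tan hx0 hx
  rw [inv_sub_cot_eq_div hx0.ne' hs.ne']
  exact div_nonneg (by linarith) (by positivity)

lemma inv_sub_cot_le {x : ℝ} (hx0 : 0 < x) (hx : x < π / 2) : x⁻¹ - cot x ≤ π / 4 * x := by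
  have hs : 0 < sin x := sin_pos_of_pos_of_lt_pi hx0 (by linarith [pi_pos])
  have hnum : sin x - x * cos x ≤ x ^ 3 / 2 := by
    nlinarith [sin_lt hx0, one_sub_sq_div_two_lt_cos hx0.ne']
  have hjordan : x ^ 3 / 2 ≤ π / 4 * x * (x * sin x) :=
    calc x ^ 3 / 2 = π / 4 * x ^ 2 * (2 / π * x) := by field_simp; ring
      _ ≤ π / 4 * x ^ 2 * sin x := by gcongr; exact mul_le_sin hx0.le hx.le
      _ = π / 4 * x * (x * sin x) := by ring
  rw [inv_sub_cot_eq_div hx0.ne' hs.ne', div_le_iff₀ (by positivity)]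
  exact hnum.trans hjordan

lemma tendsto_inv_sub_cot_nhdsGT_zero : Tendsto (fun x => x⁻¹ - cot x) (𝓝[>] 0) (𝓝 0) := by
  have hsmall : ∀ᶠ x in 𝓝[>] (0 : ℝ), x ∈ Ioo 0 (π / 2) := Ioo_mem_nhdsGT (by positivity)
  have hlin : Tendsto (fun x : ℝ => π / 4 * x) (𝓝[>] 0) (𝓝 0) :=
    tendsto_nhdsWithin_of_tendsto_nhds (by simpa using (continuous_const_mul (π / 4)).tendsto 0)
  refine tendsto_of_tendsto_of_tendsto_of_le_of_le' tendsto_const_nhds hlin ?_ ?_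
  · filter_upwards [hsmall] with x hx using inv_sub_cot_nonneg hx.1 hx.2
  · filter_upwards [hsmall] with x hx using inv_sub_cot_le hx.1 hx.2

lemma cot_pi_div_two : cot (π / 2) = 0 := by
  simp [cot_eq_cos_div_sin]

end Real

/-- The function `c : (0, π) → ℝ`, `c x = (1 - x * cot x) / x`, is strictly
increasing, tends to `0` as `x → 0+`, and satisfies `c (π/2) = 2/π`.
Consequently, `1 - x * cot x ≤ (2/π) * x` for all `0 < x ≤ π/2`. -/
theorem one_sub_xcot_div :
    StrictMonoOn (fun x : ℝ => (1 - x * Real.cot x) / x) (Set.Ioo 0 Real.pi) ∧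
    Filter.Tendsto (fun x : ℝ => (1 - x * Real.cot x) / x)
      (nhdsWithin 0 (Set.Ioi 0)) (nhds 0) ∧
    (1 - Real.pi / 2 * Real.cot (Real.pi / 2)) / (Real.pi / 2) = 2 / Real.pi ∧
    ∀ x : ℝ, 0 < x → x ≤ Real.pi / 2 →
      1 - x * Real.cot x ≤ 2 / Real.pi * x := by
  have hmono : StrictMonoOn (fun x : ℝ => (1 - x * cot x) / x) (Ioo 0 π) :=
    strictMonoOn_inv_sub_cot.congr fun x hx => (one_sub_mul_cot_div hx.1.ne').symm
  have hval : (1 - π / 2 * cot (π / 2)) / (π / 2) = 2 / π := by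
    rw [cot_pi_div_two, mul_zero, sub_zero]
    field_simp
  refine ⟨hmono, ?_, hval, fun x hx0 hx => ?_⟩
  · refine tendsto_inv_sub_cot_nhdsGT_zero.congr' ?_
    filter_upwards [self_mem_nhdsWithin] with x hx using (one_sub_mul_cot_div (ne_of_gt hx)).symm
  · have hle := hmono.monotoneOn ⟨hx0, by linarith [pi_pos]⟩ ⟨by positivity, by linarith [pi_pos]⟩ hx
    rwa [hval, div_le_iff₀ hx0] at hle
end

section
/- Suppose m is a positive integer, f : (0,∞) → ℝ is bounded and non-decreasing, g : (0,∞) → ℝ is non-negative and measurable, limsup_{t→0+} f(t)/tᵐ ≥ 1, and, setting L := lim_{t→∞} f(t) and ρ₀ := (2^{m+1}·L)^{1/m}, the inequality f(σ)/σᵐ ≤ f(ρ)/ρᵐ + ∫_σ^ρ g(t)/tᵐ dt holds for all 0 < σ < ρ ≤ ρ₀. Then there exists ρ with 0 < ρ ≤ ρ₀ such that f(5ρ) < (5ᵐ/2)·ρ₀·g(ρ). -/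
/-!
If the conclusion fails, then `g t ≤ 2 f(5t) / (5^m ρ₀)` on `(0, ρ₀]`. Put `F t = f t / t^m` and
`A = ∫_σ^ρ₀ g t / t^m dt`; the hypothesis gives `F τ ≤ F ρ₀ + A` for `σ ≤ τ ≤ ρ₀`. On `[σ, ρ₀/5]`
the integrand is at most `(2/ρ₀) F(5t) ≤ (2/ρ₀)(F ρ₀ + A)`, while on `[ρ₀/5, ρ₀]` the bound
`f ≤ L` and the choice `ρ₀^m = 2^(m+1) L` make the integral at most `1/4`. Hence
`A ≤ 2/5 (F ρ₀ + A) + 1/4`, and since `F ρ₀ ≤ 2^(-(m+1)) ≤ 1/4` this gives `F σ ≤ 5/6` for every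
`σ < ρ₀`, contradicting `limsup_{σ→0+} F σ ≥ 1`.
-/

open MeasureTheory Set Filter Topology

-- If the eventual upper bounds of `u` are unbounded below, `limsup` is the junk value `sInf = 0`.
theorem Filter.limsup_le_of_eventually_le_of_nonneg {α : Type*} {l : Filter α} {u : α → ℝ}
    {a : ℝ} (ha : 0 ≤ a) (h : ∀ᶠ x in l, u x ≤ a) : limsup u l ≤ a := by
  rw [limsup_eq]
  by_cases hb : BddBelow {b : ℝ | ∀ᶠ x in l, u x ≤ b}
  · exact csInf_le hb h
  · rw [Real.sInf_of_not_bddBelow hb]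
    exact ha

theorem MonotoneOn.le_of_tendsto_atTop {α β : Type*} [SemilatticeSup α] [Nonempty α]
    [TopologicalSpace β] [Preorder β] [OrderClosedTopology β] {f : α → β} {a t : α} {L : β}
    (hf : MonotoneOn f (Ioi a)) (hL : Tendsto f atTop (𝓝 L)) (ht : a < t) : f t ≤ L :=
  ge_of_tendsto hL <| (eventually_ge_atTop t).mono fun _ hs => hf ht (ht.trans_le hs) hs

theorem MonotoneOn.pos_of_one_le_limsup_div_pow {f : ℝ → ℝ} {m : ℕ}
    (hf : MonotoneOn f (Ioi 0)) (h : 1 ≤ limsup (fun t => f t / t ^ m) (𝓝[>] 0))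
    {t : ℝ} (ht : 0 < t) : 0 < f t := by
  by_contra! hle
  have hev : ∀ᶠ s in 𝓝[>] 0, f s / s ^ m ≤ 0 := by
    filter_upwards [Ioo_mem_nhdsGT ht] with s hs
    exact div_nonpos_of_nonpos_of_nonneg ((hf hs.1 ht hs.2.le).trans hle) (pow_nonneg hs.1.le m)
  linarith [limsup_le_of_eventually_le_of_nonneg le_rfl hev]

theorem setLIntegral_Icc_ofReal_le {φ : ℝ → ℝ} {a b C : ℝ} (hC : 0 ≤ C)
    (h : ∀ t ∈ Icc a b, φ t ≤ C) :
    ∫⁻ t in Icc a b, ENNReal.ofReal (φ t) ≤ ENNReal.ofReal (C * (b - a)) :=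
  calc ∫⁻ t in Icc a b, ENNReal.ofReal (φ t) ≤ ∫⁻ _ in Icc a b, ENNReal.ofReal C :=
        setLIntegral_mono measurable_const fun t ht => ENNReal.ofReal_le_ofReal (h t ht)
    _ = ENNReal.ofReal (C * (b - a)) := by
        rw [setLIntegral_const, Real.volume_Icc, ENNReal.ofReal_mul hC]

theorem ENNReal.le_add_toReal_of_ofReal_le_ofReal_add {x y : ℝ} {A : ENNReal} (hy : 0 ≤ y)
    (hA : A ≠ ⊤) (h : ENNReal.ofReal x ≤ ENNReal.ofReal y + A) : x ≤ y + A.toReal := by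
  rwa [ENNReal.ofReal_le_iff_le_toReal (by finiteness),
    ENNReal.toReal_add ENNReal.ofReal_ne_top hA, ENNReal.toReal_ofReal hy] at h

section SimonCovering

variable {m : ℕ} {f g : ℝ → ℝ} {L ρ₀ : ℝ}

theorem le_two_div_five_pow_mul (hρ₀ : 0 < ρ₀)
    (hg : ∀ t, 0 < t → t ≤ ρ₀ → 5 ^ m / 2 * ρ₀ * g t ≤ f (5 * t)) {t : ℝ} (ht : 0 < t)
    (htρ : t ≤ ρ₀) : g t ≤ 2 / (5 ^ m * ρ₀) * f (5 * t) := by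
  have := hg t ht htρ
  rw [div_mul_eq_mul_div, le_div_iff₀ (by positivity)]
  linarith

theorem div_pow_le_of_mem_Icc (hL : 0 ≤ L) (hf_le : ∀ t, 0 < t → f t ≤ L) (hρ₀ : 0 < ρ₀)
    (hg : ∀ t, 0 < t → t ≤ ρ₀ → 5 ^ m / 2 * ρ₀ * g t ≤ f (5 * t)) {a t : ℝ} (ha : 0 < a)
    (ht : t ∈ Icc a ρ₀) : g t / t ^ m ≤ 2 / (5 ^ m * ρ₀) * L / a ^ m := by
  have htpos : 0 < t := ha.trans_le ht.1
  have hgt : g t ≤ 2 / (5 ^ m * ρ₀) * L :=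
    (le_two_div_five_pow_mul hρ₀ hg htpos ht.2).trans <| by gcongr; exact hf_le _ (by positivity)
  exact div_le_div₀ (by positivity) hgt (by positivity) (by gcongr; exact ht.1)

theorem div_pow_le_two_div_mul_div_pow (hρ₀ : 0 < ρ₀)
    (hg : ∀ t, 0 < t → t ≤ ρ₀ → 5 ^ m / 2 * ρ₀ * g t ≤ f (5 * t)) {t : ℝ} (ht : 0 < t)
    (htρ : t ≤ ρ₀) : g t / t ^ m ≤ 2 / ρ₀ * (f (5 * t) / (5 * t) ^ m) := by
  have := le_two_div_five_pow_mul hρ₀ hg ht htρ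
  rw [mul_pow, div_le_iff₀ (by positivity)]
  calc g t ≤ 2 / (5 ^ m * ρ₀) * f (5 * t) := this
    _ = 2 / ρ₀ * (f (5 * t) / (5 ^ m * t ^ m)) * t ^ m := by field_simp

theorem div_pow_le_add_toReal_lintegral (hf : 0 ≤ f ρ₀)
    (h_ineq : ∀ σ ρ : ℝ, 0 < σ → σ < ρ → ρ ≤ ρ₀ →
      ENNReal.ofReal (f σ / σ ^ m) ≤ ENNReal.ofReal (f ρ / ρ ^ m) +
        ∫⁻ t in Ioo σ ρ, ENNReal.ofReal (g t / t ^ m))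
    {σ τ : ℝ} (hσ : 0 < σ) (hτ : τ ∈ Icc σ ρ₀)
    (hfin : ∫⁻ t in Ioo σ ρ₀, ENNReal.ofReal (g t / t ^ m) ≠ ⊤) :
    f τ / τ ^ m ≤ f ρ₀ / ρ₀ ^ m + (∫⁻ t in Ioo σ ρ₀, ENNReal.ofReal (g t / t ^ m)).toReal := by
  rcases hτ.2.eq_or_lt with rfl | hτρ
  · exact le_add_of_nonneg_right ENNReal.toReal_nonneg
  refine ENNReal.le_add_toReal_of_ofReal_le_ofReal_add
    (div_nonneg hf (pow_nonneg (hσ.le.trans (hτ.1.trans hτ.2)) m)) hfin ?_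
  calc ENNReal.ofReal (f τ / τ ^ m)
      ≤ ENNReal.ofReal (f ρ₀ / ρ₀ ^ m) + ∫⁻ t in Ioo τ ρ₀, ENNReal.ofReal (g t / t ^ m) :=
        h_ineq τ ρ₀ (hσ.trans_le hτ.1) hτρ le_rfl
    _ ≤ _ := by gcongr; exact hτ.1

theorem lintegral_Ioo_ne_top (hL : 0 ≤ L) (hf_le : ∀ t, 0 < t → f t ≤ L) (hρ₀ : 0 < ρ₀)
    (hg : ∀ t, 0 < t → t ≤ ρ₀ → 5 ^ m / 2 * ρ₀ * g t ≤ f (5 * t)) {σ : ℝ} (hσ : 0 < σ) :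
    ∫⁻ t in Ioo σ ρ₀, ENNReal.ofReal (g t / t ^ m) ≠ ⊤ :=
  ne_top_of_le_ne_top ENNReal.ofReal_ne_top <| (lintegral_mono_set Ioo_subset_Icc_self).trans <|
    setLIntegral_Icc_ofReal_le (by positivity) fun _ ht => div_pow_le_of_mem_Icc hL hf_le hρ₀ hg hσ ht

theorem lintegral_Icc_div_five_le (hm : 0 < m) (hf_le : ∀ t, 0 < t → f t ≤ L) (hρ₀ : 0 < ρ₀)
    (hρ₀m : ρ₀ ^ m = 2 ^ (m + 1) * L)
    (hg : ∀ t, 0 < t → t ≤ ρ₀ → 5 ^ m / 2 * ρ₀ * g t ≤ f (5 * t)) :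
    ∫⁻ t in Icc (ρ₀ / 5) ρ₀, ENNReal.ofReal (g t / t ^ m) ≤ ENNReal.ofReal (1 / 4) := by
  have hL : 0 < L := pos_of_mul_pos_right (hρ₀m ▸ pow_pos hρ₀ m) (by positivity)
  have h2 : (2 : ℝ) ≤ 2 ^ m := le_self_pow₀ (by norm_num) hm.ne'
  have h5 : (5 : ℝ) ≤ 5 ^ m := le_self_pow₀ (by norm_num) hm.ne'
  rw [pow_succ] at hρ₀m
  have hmid : 2 / (5 ^ m * ρ₀) * L / (ρ₀ / 5) ^ m * (ρ₀ / 2 - ρ₀ / 5) = 3 / (10 * 2 ^ m) := by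
    rw [div_pow]
    field_simp
    rw [hρ₀m]; ring
  have htop : 2 / (5 ^ m * ρ₀) * L / (ρ₀ / 2) ^ m * (ρ₀ - ρ₀ / 2) = 1 / (2 * 5 ^ m) := by
    rw [div_pow]
    field_simp
    rw [hρ₀m]; ring
  have hsplit : Icc (ρ₀ / 5) ρ₀ = Icc (ρ₀ / 5) (ρ₀ / 2) ∪ Icc (ρ₀ / 2) ρ₀ :=
    (Icc_union_Icc_eq_Icc (by linarith) (by linarith)).symm
  have hbound (a b : ℝ) (ha : 0 < a) (hb : b ≤ ρ₀) :
      ∫⁻ t in Icc a b, ENNReal.ofReal (g t / t ^ m) ≤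
        ENNReal.ofReal (2 / (5 ^ m * ρ₀) * L / a ^ m * (b - a)) :=
    setLIntegral_Icc_ofReal_le (by positivity) fun _ ht =>
      div_pow_le_of_mem_Icc hL.le hf_le hρ₀ hg ha ⟨ht.1, ht.2.trans hb⟩
  calc ∫⁻ t in Icc (ρ₀ / 5) ρ₀, ENNReal.ofReal (g t / t ^ m)
      ≤ (∫⁻ t in Icc (ρ₀ / 5) (ρ₀ / 2), ENNReal.ofReal (g t / t ^ m)) +
          ∫⁻ t in Icc (ρ₀ / 2) ρ₀, ENNReal.ofReal (g t / t ^ m) := by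
        rw [hsplit]; exact lintegral_union_le _ _ _
    _ ≤ ENNReal.ofReal (3 / (10 * 2 ^ m)) + ENNReal.ofReal (1 / (2 * 5 ^ m)) := by
        rw [← hmid, ← htop]
        gcongr
        · exact hbound _ _ (by positivity) (by linarith)
        · exact hbound _ _ (by positivity) le_rfl
    _ ≤ ENNReal.ofReal (1 / 4) := by
        rw [← ENNReal.ofReal_add (by positivity) (by positivity)]
        gcongr
        calc 3 / (10 * 2 ^ m) + 1 / (2 * 5 ^ m) ≤ (3 / (10 * 2) + 1 / (2 * 5) : ℝ) := by
              gcongr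
          _ = 1 / 4 := by norm_num

theorem lintegral_Icc_le_two_fifths_mul (hf : 0 ≤ f ρ₀) (hρ₀ : 0 < ρ₀)
    (hg : ∀ t, 0 < t → t ≤ ρ₀ → 5 ^ m / 2 * ρ₀ * g t ≤ f (5 * t))
    (h_ineq : ∀ σ ρ : ℝ, 0 < σ → σ < ρ → ρ ≤ ρ₀ →
      ENNReal.ofReal (f σ / σ ^ m) ≤ ENNReal.ofReal (f ρ / ρ ^ m) +
        ∫⁻ t in Ioo σ ρ, ENNReal.ofReal (g t / t ^ m))
    {σ : ℝ} (hσ : 0 < σ) (hfin : ∫⁻ t in Ioo σ ρ₀, ENNReal.ofReal (g t / t ^ m) ≠ ⊤) :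
    ∫⁻ t in Icc σ (ρ₀ / 5), ENNReal.ofReal (g t / t ^ m) ≤ ENNReal.ofReal (2 / 5 *
      (f ρ₀ / ρ₀ ^ m + (∫⁻ t in Ioo σ ρ₀, ENNReal.ofReal (g t / t ^ m)).toReal)) := by
  set M := f ρ₀ / ρ₀ ^ m + (∫⁻ t in Ioo σ ρ₀, ENNReal.ofReal (g t / t ^ m)).toReal
  have hM : 0 ≤ M := by positivity
  have hpt (t : ℝ) (ht : t ∈ Icc σ (ρ₀ / 5)) : g t / t ^ m ≤ 2 / ρ₀ * M := by
    have htpos : 0 < t := hσ.trans_le ht.1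
    calc g t / t ^ m ≤ 2 / ρ₀ * (f (5 * t) / (5 * t) ^ m) :=
          div_pow_le_two_div_mul_div_pow hρ₀ hg htpos (by linarith [ht.2])
      _ ≤ 2 / ρ₀ * M := by
          gcongr
          exact div_pow_le_add_toReal_lintegral hf h_ineq hσ
            ⟨by linarith [ht.1], by linarith [ht.2]⟩ hfin
  refine (setLIntegral_Icc_ofReal_le (by positivity) hpt).trans (ENNReal.ofReal_le_ofReal ?_)
  calc 2 / ρ₀ * M * (ρ₀ / 5 - σ) ≤ 2 / ρ₀ * M * (ρ₀ / 5) := by gcongr; linarith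
    _ = 2 / 5 * M := by field_simp

theorem div_pow_le_five_sixths (hm : 0 < m) (hf : 0 ≤ f ρ₀)
    (hf_le : ∀ t, 0 < t → f t ≤ L) (hρ₀ : 0 < ρ₀) (hρ₀m : ρ₀ ^ m = 2 ^ (m + 1) * L)
    (hg : ∀ t, 0 < t → t ≤ ρ₀ → 5 ^ m / 2 * ρ₀ * g t ≤ f (5 * t))
    (h_ineq : ∀ σ ρ : ℝ, 0 < σ → σ < ρ → ρ ≤ ρ₀ →
      ENNReal.ofReal (f σ / σ ^ m) ≤ ENNReal.ofReal (f ρ / ρ ^ m) +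
        ∫⁻ t in Ioo σ ρ, ENNReal.ofReal (g t / t ^ m))
    {σ : ℝ} (hσ : 0 < σ) (hσρ : σ < ρ₀) : f σ / σ ^ m ≤ 5 / 6 := by
  have hfin := lintegral_Ioo_ne_top (hf.trans (hf_le ρ₀ hρ₀)) hf_le hρ₀ hg hσ
  set A := ∫⁻ t in Ioo σ ρ₀, ENNReal.ofReal (g t / t ^ m)
  set q := f ρ₀ / ρ₀ ^ m
  have hq : q ≤ 1 / 4 := by
    have h4 : (4 : ℝ) ≤ 2 ^ (m + 1) := by
      calc (4 : ℝ) = 2 ^ 2 := by norm_num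
        _ ≤ 2 ^ (m + 1) := pow_le_pow_right₀ (by norm_num) (by omega)
    have hL : 0 < L := pos_of_mul_pos_right (hρ₀m ▸ pow_pos hρ₀ m) (by positivity)
    rw [div_le_div_iff₀ (by positivity) (by norm_num), hρ₀m]
    nlinarith [hf_le ρ₀ hρ₀]
  have hsplit : Ioo σ ρ₀ ⊆ Icc σ (ρ₀ / 5) ∪ Icc (ρ₀ / 5) ρ₀ := fun t ht =>
    (le_total t (ρ₀ / 5)).imp (fun h => ⟨ht.1.le, h⟩) (fun h => ⟨h, ht.2.le⟩)
  have hA : A ≤ ENNReal.ofReal (2 / 5 * (q + A.toReal) + 1 / 4) := by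
    rw [ENNReal.ofReal_add (by positivity) (by norm_num)]
    calc A ≤ (∫⁻ t in Icc σ (ρ₀ / 5), ENNReal.ofReal (g t / t ^ m)) +
          ∫⁻ t in Icc (ρ₀ / 5) ρ₀, ENNReal.ofReal (g t / t ^ m) :=
          (lintegral_mono_set hsplit).trans (lintegral_union_le _ _ _)
      _ ≤ _ := add_le_add (lintegral_Icc_le_two_fifths_mul hf hρ₀ hg h_ineq hσ hfin)
          (lintegral_Icc_div_five_le hm hf_le hρ₀ hρ₀m hg)
  have ha := (ENNReal.toReal_le_of_le_ofReal (by positivity) hA)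
  have hFσ := div_pow_le_add_toReal_lintegral hf h_ineq hσ ⟨le_rfl, hσρ.le⟩ hfin
  linarith

end SimonCovering

theorem simon_covering_lemma_general (m : ℕ) (hm : 0 < m) (f g : ℝ → ℝ)
    (hf_mono : MonotoneOn f (Set.Ioi 0))
    (h_limsup : 1 ≤ Filter.limsup (fun t => f t / t ^ m) (nhdsWithin 0 (Set.Ioi 0)))
    (L : ℝ) (hL : Filter.Tendsto f Filter.atTop (nhds L))
    (ρ₀ : ℝ) (hρ₀ : ρ₀ = (2 ^ (m + 1) * L) ^ (1 / (m : ℝ)))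
    (h_mono_ineq : ∀ σ ρ : ℝ, 0 < σ → σ < ρ → ρ ≤ ρ₀ →
      ENNReal.ofReal (f σ / σ ^ m) ≤ ENNReal.ofReal (f ρ / ρ ^ m) +
        ∫⁻ t in Set.Ioo σ ρ, ENNReal.ofReal (g t / t ^ m)) :
    ∃ ρ : ℝ, 0 < ρ ∧ ρ ≤ ρ₀ ∧ f (5 * ρ) < 5 ^ m / 2 * ρ₀ * g ρ := by
  by_contra! hg
  have hf_pos t (ht : 0 < t) : 0 < f t := hf_mono.pos_of_one_le_limsup_div_pow h_limsup ht
  have hf_le t (ht : 0 < t) : f t ≤ L := hf_mono.le_of_tendsto_atTop hL ht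
  have hLpos : 0 < L := (hf_pos 1 one_pos).trans_le (hf_le 1 one_pos)
  have hρ₀pos : 0 < ρ₀ := hρ₀ ▸ Real.rpow_pos_of_pos (by positivity) _
  have hρ₀m : ρ₀ ^ m = 2 ^ (m + 1) * L := by
    rw [hρ₀, one_div, Real.rpow_inv_natCast_pow (by positivity) hm.ne']
  have h_small : ∀ᶠ σ in 𝓝[>] 0, f σ / σ ^ m ≤ 5 / 6 := by
    filter_upwards [Ioo_mem_nhdsGT hρ₀pos] with σ hσ
    exact div_pow_le_five_sixths hm (hf_pos ρ₀ hρ₀pos).le hf_le hρ₀pos hρ₀m hg h_mono_ineq hσ.1 hσ.2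
  linarith [limsup_le_of_eventually_le_of_nonneg (by norm_num) h_small]

/-- Simon's covering-type lemma: if `f : (0,∞) → ℝ` is bounded and non-decreasing
with `limsup_{t→0+} f t / t ^ m ≥ 1`, `g : (0,∞) → ℝ` is non-negative and
measurable, `L = lim_{t→∞} f t`, `ρ₀ = (2 ^ (m+1) * L) ^ (1/m)`, and
`f σ / σ ^ m ≤ f ρ / ρ ^ m + ∫_σ^ρ g t / t ^ m dt` for all `0 < σ < ρ ≤ ρ₀`,
then there is `ρ` with `0 < ρ ≤ ρ₀` and `f (5ρ) < (5 ^ m / 2) * ρ₀ * g ρ`. -/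
theorem simon_covering_lemma (m : ℕ) (hm : 0 < m) (f g : ℝ → ℝ)
    (hf_bdd : ∃ C : ℝ, ∀ t ∈ Set.Ioi (0 : ℝ), |f t| ≤ C)
    (hf_mono : MonotoneOn f (Set.Ioi 0))
    (hg_nonneg : ∀ t ∈ Set.Ioi (0 : ℝ), 0 ≤ g t)
    (hg_meas : Measurable g)
    (h_limsup : 1 ≤ Filter.limsup (fun t => f t / t ^ m) (nhdsWithin 0 (Set.Ioi 0)))
    (L : ℝ) (hL : Filter.Tendsto f Filter.atTop (nhds L))
    (ρ₀ : ℝ) (hρ₀ : ρ₀ = (2 ^ (m + 1) * L) ^ (1 / (m : ℝ)))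
    (h_mono_ineq : ∀ σ ρ : ℝ, 0 < σ → σ < ρ → ρ ≤ ρ₀ →
      ENNReal.ofReal (f σ / σ ^ m) ≤ ENNReal.ofReal (f ρ / ρ ^ m) +
        ∫⁻ t in Set.Ioo σ ρ, ENNReal.ofReal (g t / t ^ m)) :
    ∃ ρ : ℝ, 0 < ρ ∧ ρ ≤ ρ₀ ∧ f (5 * ρ) < 5 ^ m / 2 * ρ₀ * g ρ :=
  simon_covering_lemma_general m hm f g hf_mono h_limsup L hL ρ₀ hρ₀ h_mono_ineq
end
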